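/- arXiv:2505.10947 — 6 statements merged into one kernel-verified Lean document; each statement's English description precedes it below -/
import Mathlib

section
/- Let f : ℝⁿ → ℝⁿ be Lipschitz continuous with f(0) = 0, and let V : ℝⁿ → ℝ be continuous with V(0) = 0 and V(x) > 0 for all x ≠ 0. Let M ≥ 1 be an integer and let σ₁, …, σ_M : ℝⁿ → ℝ be nonnegative state-dependent weights satisfying (1/M)·∑_{i=1}^M σ_i(x) ≥ 1 for all x. Suppose that for every x ≠ 0, (1/M)·∑_{i=1}^M σ_i(x)·V(f^[i](x)) < V(x), where f^[i] denotes the i-fold iterate of f. Then the origin is an asymptotically stable equilibrium of the discrete-time system x_{k+1} = f(x_k): (i) for every ε > 0 there exists δ > 0 such that ‖x₀‖ < δ implies ‖f^[k](x₀)‖ < ε for all k ≥ 0, and (ii) there exists δ₀ > 0 such that ‖x₀‖ < δ₀ implies f^[k](x₀) → 0 as k → ∞. -/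
/-!
Averaging the weighted inequality shows that from every `x ≠ 0` some iterate `f^[i] x` with
`1 ≤ i ≤ M` has strictly smaller `V`. Stability: near the origin the first `M` iterates stay in a
small ball, and the sublevel set `{‖y‖ < r, V y < c}` (with `c` the minimum of `V` on an annulus)
is re-entered within `M` steps, so orbits starting there never leave the ball. Attractivity: an
orbit avoiding a neighbourhood of the origin would stay in a compact annulus, where the decrease
of `V` within `M` steps is uniform, so `V` would decrease without bound along the orbit.
-/

open Filter Topology Metric

theorem exists_lt_of_weighted_average_lt {ι : Type*} {s : Finset ι} {w a : ι → ℝ} {b c : ℝ}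
    (hw : ∀ i ∈ s, 0 ≤ w i) (hb : 0 ≤ b) (havg : 1 ≤ c * ∑ i ∈ s, w i)
    (h : c * ∑ i ∈ s, w i * a i < b) : ∃ i ∈ s, a i < b := by
  have hc : 0 < c :=
    pos_of_mul_pos_left (one_pos.trans_le havg) (Finset.sum_nonneg hw)
  have hsum : ∑ i ∈ s, w i * a i < ∑ i ∈ s, w i * b := by
    rw [← Finset.sum_mul]
    refine lt_of_mul_lt_mul_left ?_ hc.le
    calc c * ∑ i ∈ s, w i * a i < b := h
      _ ≤ (c * ∑ i ∈ s, w i) * b := le_mul_of_one_le_left hb havg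
      _ = c * ((∑ i ∈ s, w i) * b) := mul_assoc _ _ _
  obtain ⟨i, hi, hlt⟩ := Finset.exists_lt_of_sum_lt hsum
  exact ⟨i, hi, lt_of_mul_lt_mul_left hlt (hw i hi)⟩

theorem iterate_mem_of_forall_returns {α : Type*} {f : α → α} {S B : Set α}
    (hS : ∀ y ∈ S, ∃ i, 0 < i ∧ f^[i] y ∈ S ∧ ∀ j < i, f^[j] y ∈ B)
    {x : α} (hx : x ∈ S) (k : ℕ) : f^[k] x ∈ B := by
  induction k using Nat.strong_induction_on generalizing x with
  | _ k ih =>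
    obtain ⟨i, hi, hiS, hB⟩ := hS x hx
    rcases lt_or_ge k i with hk | hk
    · exact hB k hk
    · have := ih (k - i) (by omega) hiS
      rwa [← Function.iterate_add_apply, Nat.sub_add_cancel hk] at this

theorem IsCompact.exists_pos_forall_exists_le {X ι : Type*} [TopologicalSpace X] {K : Set X}
    (hK : IsCompact K) {s : Finset ι} {g : ι → X → ℝ} (hg : ∀ i ∈ s, Continuous (g i))
    (hpos : ∀ x ∈ K, ∃ i ∈ s, 0 < g i x) : ∃ η > 0, ∀ x ∈ K, ∃ i ∈ s, η ≤ g i x := by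
  rcases s.eq_empty_or_nonempty with rfl | hs
  · exact ⟨1, one_pos, fun x hx => by simpa using hpos x hx⟩
  · obtain ⟨η, hη, hle⟩ := hK.exists_forall_le' (Continuous.finset_sup'_apply hs hg).continuousOn
      fun x hx => (Finset.lt_sup'_iff hs).2 (hpos x hx)
    exact ⟨η, hη, fun x hx => (Finset.le_sup'_iff hs).1 (hle x hx)⟩

theorem exists_iterate_notMem_of_forall_exists_le_sub {α : Type*} {f : α → α} {V : α → ℝ}
    {K : Set α} {η : ℝ} (hη : 0 < η) (hV : ∀ x, 0 ≤ V x)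
    (hdesc : ∀ x ∈ K, ∃ i, V (f^[i] x) ≤ V x - η) (x : α) : ∃ k, f^[k] x ∉ K := by
  by_contra! hK
  have hdrop : ∀ m : ℕ, ∃ k, V (f^[k] x) ≤ V x - m * η := by
    intro m
    induction m with
    | zero => exact ⟨0, by simp⟩
    | succ m ih =>
      obtain ⟨k, hk⟩ := ih
      obtain ⟨i, hi⟩ := hdesc _ (hK k)
      refine ⟨i + k, ?_⟩
      rw [Function.iterate_add_apply]
      push_cast
      linarith
  obtain ⟨m, hm⟩ := exists_nat_gt (V x / η)
  obtain ⟨k, hk⟩ := hdrop m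
  rw [div_lt_iff₀ hη] at hm
  linarith [hV (f^[k] x)]

section AsymptoticStability

variable {E : Type*} [NormedAddCommGroup E] [ProperSpace E] {f : E → E} {V : E → ℝ} {M : ℕ}

theorem iterate_stable (hf : ContinuousAt f 0) (hf0 : f 0 = 0) (hV : Continuous V)
    (hV0 : V 0 = 0) (hVpos : ∀ x, x ≠ 0 → 0 < V x) (hM : 1 ≤ M)
    (hdesc : ∀ x, x ≠ 0 → ∃ i ∈ Finset.Icc 1 M, V (f^[i] x) < V x) :
    ∀ ε > (0 : ℝ), ∃ δ > (0 : ℝ), ∀ x, ‖x‖ < δ → ∀ k, ‖f^[k] x‖ < ε := by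
  intro ε hε
  obtain ⟨r, hr, hrε⟩ : ∃ r > 0, ∀ y, ‖y‖ < r → ∀ j ≤ M, ‖f^[j] y‖ < ε := by
    have : ∀ᶠ y in 𝓝 (0 : E), ∀ j ∈ Finset.range (M + 1), f^[j] y ∈ ball 0 ε :=
      (eventually_all_finset _).2 fun j _ => (hf.iterate hf0 j).preimage_mem_nhds
        (by simpa [Function.iterate_fixed hf0] using ball_mem_nhds (0 : E) hε)
    simpa [Metric.eventually_nhds_iff, Nat.lt_succ_iff] using this
  obtain ⟨c, hc, hcV⟩ := ((isCompact_closedBall (0 : E) ε).diff isOpen_ball).exists_forall_le'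
    hV.continuousOn fun x hx => hVpos x (by rintro rfl; exact hx.2 (mem_ball_self hr))
  obtain ⟨δ, hδ, hδV⟩ : ∃ δ > 0, ∀ y, ‖y‖ < δ → V y < c := by
    have : ∀ᶠ y in 𝓝 (0 : E), V y < c :=
      hV.continuousAt.eventually (gt_mem_nhds (hV0 ▸ hc))
    simpa [Metric.eventually_nhds_iff] using this
  set S : Set E := {y | ‖y‖ < r ∧ V y < c}
  have hreturn : ∀ y ∈ S, ∃ i, 0 < i ∧ f^[i] y ∈ S ∧ ∀ j < i, f^[j] y ∈ ball 0 ε := by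
    rintro y ⟨hyr, hyc⟩
    obtain ⟨i, hi, hVi⟩ : ∃ i ∈ Finset.Icc 1 M, V (f^[i] y) ≤ V y := by
      rcases eq_or_ne y 0 with rfl | hy
      · exact ⟨1, by simp [hM], by simp [hf0]⟩
      · obtain ⟨i, hi, h⟩ := hdesc y hy
        exact ⟨i, hi, h.le⟩
    rw [Finset.mem_Icc] at hi
    refine ⟨i, hi.1, ⟨?_, hVi.trans_lt hyc⟩,
      fun j hj => mem_ball_zero_iff.2 (hrε y hyr j (by omega))⟩
    by_contra! hle
    exact (hVi.trans_lt hyc).not_ge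
      (hcV _ ⟨mem_closedBall_zero_iff.2 (hrε y hyr i hi.2).le, by simpa using hle⟩)
  refine ⟨min r δ, lt_min hr hδ, fun x hx k => ?_⟩
  have hxS : x ∈ S :=
    ⟨hx.trans_le (min_le_left _ _), hδV x (hx.trans_le (min_le_right _ _))⟩
  exact mem_ball_zero_iff.1 (iterate_mem_of_forall_returns hreturn hxS k)

theorem tendsto_iterate_zero (hf : Continuous f) (hf0 : f 0 = 0) (hV : Continuous V)
    (hV0 : V 0 = 0) (hVpos : ∀ x, x ≠ 0 → 0 < V x) (hM : 1 ≤ M)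
    (hdesc : ∀ x, x ≠ 0 → ∃ i ∈ Finset.Icc 1 M, V (f^[i] x) < V x) :
    ∃ δ₀ > (0 : ℝ), ∀ x, ‖x‖ < δ₀ → Tendsto (fun k => f^[k] x) atTop (𝓝 0) := by
  have hstable := iterate_stable hf.continuousAt hf0 hV hV0 hVpos hM hdesc
  obtain ⟨δ₀, hδ₀, hbdd⟩ := hstable 1 one_pos
  refine ⟨δ₀, hδ₀, fun x hx => ?_⟩
  have hVnn : ∀ y, 0 ≤ V y := fun y =>
    (eq_or_ne y 0).elim (fun h => h ▸ hV0.ge) fun h => (hVpos y h).le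
  have hvisit : ∀ δ > (0 : ℝ), ∃ N, ‖f^[N] x‖ < δ := by
    intro δ hδ
    obtain ⟨η, hη, hKdesc⟩ :=
      ((isCompact_closedBall (0 : E) 1).diff isOpen_ball).exists_pos_forall_exists_le
        (s := Finset.Icc 1 M) (g := fun i y => V y - V (f^[i] y))
        (fun i _ => hV.sub (hV.comp (hf.iterate i)))
        fun y hy => by
          simpa [sub_pos] using hdesc y (by rintro rfl; exact hy.2 (mem_ball_self hδ))
    obtain ⟨N, hN⟩ := exists_iterate_notMem_of_forall_exists_le_sub hη hVnn
      (fun y hy => let ⟨i, _, hi⟩ := hKdesc y hy; ⟨i, by linarith⟩) x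
    refine ⟨N, ?_⟩
    by_contra! h
    exact hN ⟨mem_closedBall_zero_iff.2 (hbdd x hx N).le, by simpa using h⟩
  rw [Metric.tendsto_atTop]
  intro ε hε
  obtain ⟨δ, hδ, hδε⟩ := hstable ε hε
  obtain ⟨N, hN⟩ := hvisit δ hδ
  refine ⟨N, fun k hk => ?_⟩
  rw [dist_zero_right, ← Nat.sub_add_cancel hk, Function.iterate_add_apply]
  exact hδε _ hN _

end AsymptoticStability

/-- (Asymptotic stability via a generalized Lyapunov function.)
Let `f : ℝⁿ → ℝⁿ` be Lipschitz with `f(0) = 0`, `V : ℝⁿ → ℝ` continuous, positive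
definite.  If there are `M ≥ 1` and nonnegative state-dependent weights
`σ₁, …, σ_M : ℝⁿ → ℝ` with average at least `1` such that
`(1/M)·∑_{i=1}^M σ_i(x)·V(f^[i](x)) < V(x)` for all `x ≠ 0`, then the origin is an
asymptotically stable equilibrium of `x_{k+1} = f(x_k)`: (i) Lyapunov stability, and
(ii) local attractivity. -/
theorem generalized_lyapunov_asymptotic_stability
    (n : ℕ) (f : EuclideanSpace ℝ (Fin n) → EuclideanSpace ℝ (Fin n))
    (hfLip : ∃ L : NNReal, LipschitzWith L f) (hf0 : f 0 = 0)
    (V : EuclideanSpace ℝ (Fin n) → ℝ) (hVcont : Continuous V)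
    (hV0 : V 0 = 0) (hVpos : ∀ x, x ≠ 0 → 0 < V x)
    (M : ℕ) (hM : 1 ≤ M)
    (σ : ℕ → EuclideanSpace ℝ (Fin n) → ℝ)
    (hσ : ∀ i ∈ Finset.Icc 1 M, ∀ x, 0 ≤ σ i x)
    (hσavg : ∀ x, 1 ≤ (1 / (M : ℝ)) * ∑ i ∈ Finset.Icc 1 M, σ i x)
    (hdec : ∀ x, x ≠ 0 →
      (1 / (M : ℝ)) * ∑ i ∈ Finset.Icc 1 M, σ i x * V (f^[i] x) < V x) :
    (∀ ε > (0 : ℝ), ∃ δ > (0 : ℝ), ∀ x₀, ‖x₀‖ < δ → ∀ k, ‖f^[k] x₀‖ < ε) ∧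
    (∃ δ₀ > (0 : ℝ), ∀ x₀, ‖x₀‖ < δ₀ →
      Filter.Tendsto (fun k => f^[k] x₀) Filter.atTop (nhds 0)) := by
  obtain ⟨L, hL⟩ := hfLip
  have hdesc : ∀ x, x ≠ 0 → ∃ i ∈ Finset.Icc 1 M, V (f^[i] x) < V x := fun x hx =>
    exists_lt_of_weighted_average_lt (fun i hi => hσ i hi x) (hVpos x hx).le (hσavg x) (hdec x hx)
  exact ⟨iterate_stable hL.continuous.continuousAt hf0 hVcont hV0 hVpos hM hdesc,
    tendsto_iterate_zero hL.continuous hf0 hVcont hV0 hVpos hM hdesc⟩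
end

section
/- Let f : ℝⁿ → ℝⁿ and V : ℝⁿ → ℝ be arbitrary functions, let M ≥ 1 be an integer, and let σ₁, …, σ_M be real numbers with ∑_{i=1}^M σ_i = M. Define a_j := (1/M)·∑_{i=j+1}^M σ_i for j = 0, …, M−1, and define W(x) := ∑_{j=0}^{M−1} a_j · V(f^[j](x)), where f^[j] denotes the j-fold iterate of f. Then for every x ∈ ℝⁿ: W(f(x)) − W(x) = (1/M)·∑_{i=1}^M σ_i·V(f^[i](x)) − V(x). -/
/-!
With `u j = V (f^[j] x)` and tail sums `T j = ∑_{i = j+1}^{M} σ i`, one has `M • a j = T j`, so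
`M • (W (f x) - W x) = ∑_{j<M} T j * (u (j+1) - u j)`. Summation by parts turns this into
`∑_{i=1}^{M} σ i * u i - T 0 * u 0`, because `T j - T (j+1) = σ (j+1)` and `T M = 0`;
finally `T 0 = M`.
-/

open Finset

theorem Finset.sum_range_mul_sub_eq {R : Type*} [CommRing R] (a u : ℕ → R) (M : ℕ) :
    ∑ j ∈ range M, a j * (u (j + 1) - u j) =
      ∑ j ∈ range M, (a j - a (j + 1)) * u (j + 1) + a M * u M - a 0 * u 0 := by
  induction M with
  | zero => simp
  | succ M ih => rw [sum_range_succ, ih, sum_range_succ]; ring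

theorem Finset.sum_Icc_eq_add_sum_Icc_succ {R : Type*} [AddCommMonoid R] (σ : ℕ → R)
    {a b : ℕ} (hab : a ≤ b) :
    ∑ i ∈ Icc a b, σ i = σ a + ∑ i ∈ Icc (a + 1) b, σ i := by
  rw [← insert_Icc_succ_left_eq_Icc hab, sum_insert (by simp), Order.succ_eq_add_one]

theorem Finset.sum_range_tail_mul_sub {R : Type*} [CommRing R] (σ u : ℕ → R) (M : ℕ) :
    ∑ j ∈ range M, (∑ i ∈ Icc (j + 1) M, σ i) * (u (j + 1) - u j) =
      ∑ i ∈ Icc 1 M, σ i * u i - (∑ i ∈ Icc 1 M, σ i) * u 0 := by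
  have hshift : ∑ i ∈ Icc 1 M, σ i * u i = ∑ j ∈ range M, σ (j + 1) * u (j + 1) := by
    rw [← Ico_add_one_right_eq_Icc, sum_Ico_eq_sum_range]
    simp only [add_tsub_cancel_right, add_comm 1]
  have hdiff : ∀ j ∈ range M,
      ∑ i ∈ Icc (j + 1) M, σ i - ∑ i ∈ Icc (j + 1 + 1) M, σ i = σ (j + 1) :=
    fun j hj => by rw [sum_Icc_eq_add_sum_Icc_succ σ (mem_range.mp hj), add_sub_cancel_right]
  rw [sum_range_mul_sub_eq, Icc_eq_empty_of_lt (Nat.lt_succ_self M), sum_empty, hshift,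
    sum_congr rfl fun j hj => by rw [hdiff j hj]]
  ring

/-- (Telescoping identity.)  Let `f : ℝⁿ → ℝⁿ` and `V : ℝⁿ → ℝ` be
arbitrary, `M ≥ 1`, and `σ₁, …, σ_M` reals with `∑_{i=1}^M σ_i = M`.  With
`a_j := (1/M)·∑_{i=j+1}^M σ_i` for `j = 0, …, M−1` and
`W(x) := ∑_{j=0}^{M−1} a_j·V(f^[j](x))`, one has for every `x`:
`W(f(x)) − W(x) = (1/M)·∑_{i=1}^M σ_i·V(f^[i](x)) − V(x)`. -/
theorem telescoping_identity_W
    (n : ℕ) (f : EuclideanSpace ℝ (Fin n) → EuclideanSpace ℝ (Fin n))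
    (V : EuclideanSpace ℝ (Fin n) → ℝ)
    (M : ℕ) (hM : 1 ≤ M)
    (σ : ℕ → ℝ) (hσsum : ∑ i ∈ Finset.Icc 1 M, σ i = (M : ℝ))
    (a : ℕ → ℝ) (ha : ∀ j, a j = (1 / (M : ℝ)) * ∑ i ∈ Finset.Icc (j + 1) M, σ i)
    (W : EuclideanSpace ℝ (Fin n) → ℝ)
    (hW : ∀ x, W x = ∑ j ∈ Finset.range M, a j * V (f^[j] x)) :
    ∀ x, W (f x) - W x =
      (1 / (M : ℝ)) * ∑ i ∈ Finset.Icc 1 M, σ i * V (f^[i] x) - V x := by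
  intro x
  have hM0 : (M : ℝ) ≠ 0 := Nat.cast_ne_zero.mpr (by omega)
  calc W (f x) - W x = ∑ j ∈ range M, a j * (V (f^[j + 1] x) - V (f^[j] x)) := by
        simp only [hW, Function.iterate_succ_apply, mul_sub, sum_sub_distrib]
    _ = (1 / (M : ℝ)) * ∑ j ∈ range M,
          (∑ i ∈ Icc (j + 1) M, σ i) * (V (f^[j + 1] x) - V (f^[j] x)) := by
        rw [mul_sum]
        exact sum_congr rfl fun j _ => by rw [ha, mul_assoc]
    _ = _ := by
        rw [sum_range_tail_mul_sub σ (fun j => V (f^[j] x)), hσsum, Function.iterate_zero_apply,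
          mul_sub, ← mul_assoc, one_div_mul_cancel hM0, one_mul]
end

section
/- Let f : ℝⁿ → ℝⁿ with f(0) = 0, and let V : ℝⁿ → ℝ satisfy V(x) ≥ 0 for all x, V(0) = 0, and V(x) > 0 for all x ≠ 0. Let M ≥ 1 be an integer and σ₁, …, σ_M ≥ 0 with ∑_{i=1}^M σ_i = M, and suppose that for every x ≠ 0: (1/M)·∑_{i=1}^M σ_i·V(f^[i](x)) < V(x). Define a_j := (1/M)·∑_{i=j+1}^M σ_i for j = 0, …, M−1 and W(x) := ∑_{j=0}^{M−1} a_j·V(f^[j](x)). Then W is a classical Lyapunov function for the system x_{k+1} = f(x_k): W(0) = 0, W(x) ≥ V(x) > 0 for all x ≠ 0, and W(f(x)) − W(x) < 0 for all x ≠ 0. -/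
/-!
The weights `a_j` are the tail sums of `σ / M`, so `a_0 = 1`, `a_M = 0` and
`a_j - a_{j+1} = σ_{j+1} / M`. Summing by parts along the orbit, `W (f x) - W x` telescopes to
`(1/M) ∑ σ_i V (f^[i] x) - V x`, which is negative by the generalized decrease condition, while
`W x ≥ a_0 V x = V x` because every weight is nonnegative.
-/

open Finset Function

theorem Finset.sum_range_mul_succ_sub_sum_range_mul {R : Type*} [CommRing R] (a g : ℕ → R)
    (M : ℕ) :
    ∑ j ∈ range M, a j * g (j + 1) - ∑ j ∈ range M, a j * g j =
      ∑ j ∈ range M, (a j - a (j + 1)) * g (j + 1) + a M * g M - a 0 * g 0 := by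
  induction M with
  | zero => simp
  | succ M ih =>
    simp only [sum_range_succ]
    linear_combination ih

noncomputable def tailWeight (σ : ℕ → ℝ) (M j : ℕ) : ℝ :=
  (1 / (M : ℝ)) * ∑ i ∈ Icc (j + 1) M, σ i

section TailWeight

variable {σ : ℕ → ℝ} {M : ℕ}

theorem tailWeight_zero (hM : M ≠ 0) (hσsum : ∑ i ∈ Icc 1 M, σ i = M) :
    tailWeight σ M 0 = 1 := by
  rw [tailWeight, zero_add, hσsum]
  field_simp

theorem tailWeight_self : tailWeight σ M M = 0 := by
  simp [tailWeight]

theorem tailWeight_sub_succ {j : ℕ} (hj : j < M) :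
    tailWeight σ M j - tailWeight σ M (j + 1) = 1 / (M : ℝ) * σ (j + 1) := by
  have hIcc : Icc (j + 1) M = insert (j + 1) (Icc (j + 2) M) := by
    ext k
    simp only [mem_Icc, mem_insert]
    omega
  rw [tailWeight, tailWeight, hIcc, sum_insert (by simp)]
  ring

theorem tailWeight_nonneg (hσ : ∀ i ∈ Icc 1 M, 0 ≤ σ i) (j : ℕ) : 0 ≤ tailWeight σ M j := by
  refine mul_nonneg (by positivity) (sum_nonneg fun i hi => hσ i ?_)
  simp only [mem_Icc] at hi ⊢
  omega

variable {α : Type*} (f : α → α) (V : α → ℝ)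

theorem tailWeight_orbit_sum_apply_sub (hM : M ≠ 0) (hσsum : ∑ i ∈ Icc 1 M, σ i = M) (x : α) :
    ∑ j ∈ range M, tailWeight σ M j * V (f^[j] (f x)) -
        ∑ j ∈ range M, tailWeight σ M j * V (f^[j] x) =
      1 / (M : ℝ) * ∑ i ∈ Icc 1 M, σ i * V (f^[i] x) - V x := by
  simp_rw [← iterate_succ_apply]
  rw [sum_range_mul_succ_sub_sum_range_mul (tailWeight σ M) (fun j => V (f^[j] x)),
    sum_congr rfl fun j hj => by rw [tailWeight_sub_succ (mem_range.mp hj)],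
    tailWeight_self, tailWeight_zero hM hσsum, ← Ico_add_one_right_eq_Icc,
    sum_Ico_eq_sum_range, mul_sum]
  simp only [add_tsub_cancel_right, add_comm 1, iterate_zero_apply, mul_assoc, zero_mul,
    add_zero, one_mul]

theorem le_tailWeight_orbit_sum (hM : M ≠ 0) (hσ : ∀ i ∈ Icc 1 M, 0 ≤ σ i)
    (hσsum : ∑ i ∈ Icc 1 M, σ i = M) (hVnonneg : ∀ x, 0 ≤ V x) (x : α) :
    V x ≤ ∑ j ∈ range M, tailWeight σ M j * V (f^[j] x) := by
  calc V x = tailWeight σ M 0 * V (f^[0] x) := by simp [tailWeight_zero hM hσsum]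
    _ ≤ _ := single_le_sum (f := fun j => tailWeight σ M j * V (f^[j] x))
        (fun j _ => mul_nonneg (tailWeight_nonneg hσ j) (hVnonneg _))
        (mem_range.mpr (Nat.pos_of_ne_zero hM))

end TailWeight

/-- (Explicit construction of a classical Lyapunov function.)
Let `f : ℝⁿ → ℝⁿ` with `f(0) = 0`, and let `V : ℝⁿ → ℝ` be nonnegative, zero at the
origin and positive elsewhere.  Let `M ≥ 1`, `σ₁, …, σ_M ≥ 0` with `∑ σ_i = M`, and
suppose the strict generalized `M`-step decrease
`(1/M)·∑_{i=1}^M σ_i·V(f^[i](x)) < V(x)` holds for every `x ≠ 0`.  With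
`a_j := (1/M)·∑_{i=j+1}^M σ_i` and `W(x) := ∑_{j=0}^{M−1} a_j·V(f^[j](x))`, the
function `W` is a classical Lyapunov function: `W(0) = 0`, `W(x) ≥ V(x) > 0` for
`x ≠ 0`, and `W(f(x)) − W(x) < 0` for `x ≠ 0`. -/
theorem classical_lyapunov_from_generalized
    (n : ℕ) (f : EuclideanSpace ℝ (Fin n) → EuclideanSpace ℝ (Fin n)) (hf0 : f 0 = 0)
    (V : EuclideanSpace ℝ (Fin n) → ℝ)
    (hVnonneg : ∀ x, 0 ≤ V x) (hV0 : V 0 = 0) (hVpos : ∀ x, x ≠ 0 → 0 < V x)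
    (M : ℕ) (hM : 1 ≤ M)
    (σ : ℕ → ℝ) (hσ : ∀ i ∈ Finset.Icc 1 M, 0 ≤ σ i)
    (hσsum : ∑ i ∈ Finset.Icc 1 M, σ i = (M : ℝ))
    (hdec : ∀ x, x ≠ 0 →
      (1 / (M : ℝ)) * ∑ i ∈ Finset.Icc 1 M, σ i * V (f^[i] x) < V x)
    (a : ℕ → ℝ) (ha : ∀ j, a j = (1 / (M : ℝ)) * ∑ i ∈ Finset.Icc (j + 1) M, σ i)
    (W : EuclideanSpace ℝ (Fin n) → ℝ)
    (hW : ∀ x, W x = ∑ j ∈ Finset.range M, a j * V (f^[j] x)) :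
    W 0 = 0 ∧
    (∀ x, x ≠ 0 → V x ≤ W x ∧ 0 < V x) ∧
    (∀ x, x ≠ 0 → W (f x) - W x < 0) := by
  obtain rfl : a = tailWeight σ M := funext ha
  obtain rfl : W = fun x => ∑ j ∈ range M, tailWeight σ M j * V (f^[j] x) := funext hW
  have hM0 : M ≠ 0 := Nat.one_le_iff_ne_zero.mp hM
  refine ⟨?_, fun x hx => ⟨?_, hVpos x hx⟩, fun x hx => ?_⟩
  · simp [iterate_fixed hf0, hV0]
  · exact le_tailWeight_orbit_sum f V hM0 hσ hσsum hVnonneg x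
  · rw [tailWeight_orbit_sum_apply_sub f V hM0 hσsum x]
    linarith [hdec x hx]
end

section
/- Let A be a real n×n matrix, B a real n×m matrix, Q a real symmetric positive semidefinite n×n matrix, R a real symmetric positive semidefinite m×m matrix, γ ∈ (0,1], K a real m×n matrix, F := A + BK, and P_γ a real symmetric n×n matrix satisfying the closed-loop Bellman identity P_γ = Q + KᵀRK + γ·FᵀP_γF. Let ϖ > 0 and let S₀, S₁ be real symmetric n×n matrices such that the block matrix [AᵀS₀A − S₀ + S₁ − ϖQ , AᵀS₀B ; BᵀS₀A , BᵀS₀B − ϖR] is negative semidefinite and the matrix (1/ϖ)·S₁ − (1/γ − 1)·P_γ is positive definite. Then the function V(x) := xᵀ(P_γ + (1/ϖ)·S₀)x satisfies the strict classical one-step Lyapunov decrease along the closed loop: V(Fx) − V(x) < 0 for every x ≠ 0. -/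
/-!
Write `u = Kx`, so that `Fx = Ax + Bu`. Evaluating the Bellman identity, the LMI (at the stacked
vector `(x, u)`) and the positive definiteness assumption at `x` gives three scalar relations among
the quadratic forms of `P_γ`, `Q`, `R`, `S₀`, `S₁`. Eliminating `(Fx)ᵀP_γ(Fx)` through the Bellman
identity and `(Fx)ᵀS₀(Fx) − xᵀS₀x` through the LMI bounds `γ·(V(Fx) − V(x))` above by
`−γ·xᵀ((1/ϖ)S₁ − (1/γ − 1)P_γ)x − (1 − γ)·(xᵀQx + uᵀRu)`, which is negative.
-/

open Matrix

section

variable {k m n : Type*} {α : Type*} [CommSemiring α]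

theorem dotProduct_transpose_mul_mul_mulVec {k' : Type*} [Fintype k] [Fintype k'] [Fintype m]
    [Fintype n] (M : Matrix k m α) (W : Matrix k k' α) (L : Matrix k' n α) (x : m → α)
    (y : n → α) :
    x ⬝ᵥ (Mᵀ * W * L) *ᵥ y = M *ᵥ x ⬝ᵥ W *ᵥ (L *ᵥ y) := by
  rw [← mulVec_mulVec, ← mulVec_mulVec, dotProduct_mulVec, vecMul_transpose]

theorem fromBlocks_transpose_mul_mul [Fintype k] (A : Matrix k m α) (B : Matrix k n α)
    (S : Matrix k k α) :
    fromBlocks (Aᵀ * S * A) (Aᵀ * S * B) (Bᵀ * S * A) (Bᵀ * S * B)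
      = (fromCols A B)ᵀ * S * fromCols A B := by
  rw [transpose_fromCols, fromRows_mul, fromRows_mul_fromCols]

theorem sumElim_dotProduct_fromBlocks_mulVec_sumElim [Fintype m] [Fintype n]
    (Y : Matrix m m α) (U : Matrix n n α) (x : m → α) (u : n → α) :
    Sum.elim x u ⬝ᵥ fromBlocks Y 0 0 U *ᵥ Sum.elim x u = x ⬝ᵥ Y *ᵥ x + u ⬝ᵥ U *ᵥ u := by
  simp [fromBlocks_mulVec]

end

theorem dotProduct_mulVec_le_of_neg_fromBlocks_posSemidef {k m : Type*} [Fintype k] [Fintype m]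
    {A : Matrix k k ℝ} {B : Matrix k m ℝ} {S T Y : Matrix k k ℝ} {U : Matrix m m ℝ}
    (hlmi : (-(fromBlocks (Aᵀ * S * A - S + T - Y) (Aᵀ * S * B) (Bᵀ * S * A)
      (Bᵀ * S * B - U))).PosSemidef) (x : k → ℝ) (u : m → ℝ) :
    (A *ᵥ x + B *ᵥ u) ⬝ᵥ S *ᵥ (A *ᵥ x + B *ᵥ u) - x ⬝ᵥ S *ᵥ x + x ⬝ᵥ T *ᵥ x
      ≤ x ⬝ᵥ Y *ᵥ x + u ⬝ᵥ U *ᵥ u := by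
  have hsplit : fromBlocks (Aᵀ * S * A - S + T - Y) (Aᵀ * S * B) (Bᵀ * S * A) (Bᵀ * S * B - U)
      = (fromCols A B)ᵀ * S * fromCols A B - fromBlocks (S - T + Y) 0 0 U := by
    rw [← fromBlocks_transpose_mul_mul]
    ext (i | i) (j | j) <;> simp
    abel
  have h := hlmi.dotProduct_mulVec_nonneg (Sum.elim x u)
  rw [hsplit, star_trivial, neg_mulVec, dotProduct_neg, sub_mulVec, dotProduct_sub,
    dotProduct_transpose_mul_mul_mulVec, fromCols_mulVec_sumElim,
    sumElim_dotProduct_fromBlocks_mulVec_sumElim] at h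
  simp only [add_mulVec, sub_mulVec, dotProduct_add, dotProduct_sub] at h
  linarith

theorem lyapunov_increment_neg_of_bellman_of_lmi {γ ϖ a f q r s₀ s₀' s₁ : ℝ} (hγ0 : 0 < γ)
    (hγ1 : γ ≤ 1) (hϖ : 0 < ϖ) (hbellman : a = q + r + γ * f)
    (hlmi : s₀' - s₀ + s₁ ≤ ϖ * q + ϖ * r) (hpd : 0 < 1 / ϖ * s₁ - (1 / γ - 1) * a)
    (hq : 0 ≤ q) (hr : 0 ≤ r) :
    f + 1 / ϖ * s₀' - (a + 1 / ϖ * s₀) < 0 := by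
  have hlmi' : 1 / ϖ * (s₀' - s₀) ≤ q + r - 1 / ϖ * s₁ := by
    have := mul_le_mul_of_nonneg_left hlmi (one_div_nonneg.2 hϖ.le)
    field_simp at this ⊢
    linarith
  have hf : f = 1 / γ * (a - q - r) := by
    field_simp
    linarith
  have hγ : 0 ≤ 1 / γ - 1 := by
    rw [sub_nonneg, le_div_iff₀ hγ0]
    linarith
  calc f + 1 / ϖ * s₀' - (a + 1 / ϖ * s₀) = f - a + 1 / ϖ * (s₀' - s₀) := by ring
    _ ≤ f - a + (q + r - 1 / ϖ * s₁) := by gcongr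
    _ = -(1 / ϖ * s₁ - (1 / γ - 1) * a) - (1 / γ - 1) * (q + r) := by
      rw [hf]
      ring
    _ < 0 := by linarith [mul_nonneg hγ (add_nonneg hq hr)]

theorem classical_lqr_lmi_decrease_general
    (n m : ℕ)
    (A : Matrix (Fin n) (Fin n) ℝ) (B : Matrix (Fin n) (Fin m) ℝ)
    (Q : Matrix (Fin n) (Fin n) ℝ) (hQ : Q.PosSemidef)
    (R : Matrix (Fin m) (Fin m) ℝ) (hR : R.PosSemidef)
    (γ : ℝ) (hγ0 : 0 < γ) (hγ1 : γ ≤ 1)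
    (K : Matrix (Fin m) (Fin n) ℝ)
    (F : Matrix (Fin n) (Fin n) ℝ) (hF : F = A + B * K)
    (Pγ : Matrix (Fin n) (Fin n) ℝ)
    (hbellman : Pγ = Q + Kᵀ * R * K + γ • (Fᵀ * Pγ * F))
    (ϖ : ℝ) (hϖ : 0 < ϖ)
    (S₀ S₁ : Matrix (Fin n) (Fin n) ℝ)
    (hlmi : (-(Matrix.fromBlocks
        (Aᵀ * S₀ * A - S₀ + S₁ - ϖ • Q) (Aᵀ * S₀ * B)
        (Bᵀ * S₀ * A) (Bᵀ * S₀ * B - ϖ • R))).PosSemidef)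
    (hpd : ((1 / ϖ) • S₁ - (1 / γ - 1) • Pγ).PosDef) :
    ∀ x : Fin n → ℝ, x ≠ 0 →
      F.mulVec x ⬝ᵥ (Pγ + (1 / ϖ) • S₀).mulVec (F.mulVec x)
        - x ⬝ᵥ (Pγ + (1 / ϖ) • S₀).mulVec x < 0 := by
  intro x hx
  have hFx : F *ᵥ x = A *ᵥ x + B *ᵥ (K *ᵥ x) := by rw [hF, add_mulVec, mulVec_mulVec]
  have hbellman_x : x ⬝ᵥ Pγ *ᵥ x
      = x ⬝ᵥ Q *ᵥ x + K *ᵥ x ⬝ᵥ R *ᵥ (K *ᵥ x) + γ * (F *ᵥ x ⬝ᵥ Pγ *ᵥ (F *ᵥ x)) := by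
    conv_lhs => rw [hbellman]
    simp only [add_mulVec, smul_mulVec, dotProduct_add, dotProduct_smul, smul_eq_mul,
      dotProduct_transpose_mul_mul_mulVec]
  have hlmi_x := dotProduct_mulVec_le_of_neg_fromBlocks_posSemidef hlmi x (K *ᵥ x)
  have hpd_x := hpd.dotProduct_mulVec_pos hx
  rw [← hFx] at hlmi_x
  simp only [star_trivial, sub_mulVec, smul_mulVec, dotProduct_sub, dotProduct_smul,
    smul_eq_mul] at hlmi_x hpd_x
  simp only [add_mulVec, smul_mulVec, dotProduct_add, dotProduct_smul, smul_eq_mul]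
  exact lyapunov_increment_neg_of_bellman_of_lmi hγ0 hγ1 hϖ hbellman_x hlmi_x hpd_x
    (hQ.dotProduct_mulVec_nonneg x) (hR.dotProduct_mulVec_nonneg _)

/-- (Classical one-step Lyapunov LMI result for discounted LQR.)
With `F = A + BK` the closed loop and `P_γ` solving the closed-loop Bellman identity
`P_γ = Q + KᵀRK + γ·FᵀP_γF`, if the block matrix
`[AᵀS₀A − S₀ + S₁ − ϖQ , AᵀS₀B ; BᵀS₀A , BᵀS₀B − ϖR]` is negative semidefinite and
`(1/ϖ)·S₁ − (1/γ − 1)·P_γ` is positive definite, then the function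
`V(x) = xᵀ(P_γ + (1/ϖ)·S₀)x` satisfies `V(Fx) − V(x) < 0` for every `x ≠ 0`. -/
theorem classical_lqr_lmi_decrease
    (n m : ℕ)
    (A : Matrix (Fin n) (Fin n) ℝ) (B : Matrix (Fin n) (Fin m) ℝ)
    (Q : Matrix (Fin n) (Fin n) ℝ) (hQ : Q.PosSemidef)
    (R : Matrix (Fin m) (Fin m) ℝ) (hR : R.PosSemidef)
    (γ : ℝ) (hγ0 : 0 < γ) (hγ1 : γ ≤ 1)
    (K : Matrix (Fin m) (Fin n) ℝ)
    (F : Matrix (Fin n) (Fin n) ℝ) (hF : F = A + B * K)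
    (Pγ : Matrix (Fin n) (Fin n) ℝ) (hPγsymm : Pγ.IsSymm)
    (hbellman : Pγ = Q + Kᵀ * R * K + γ • (Fᵀ * Pγ * F))
    (ϖ : ℝ) (hϖ : 0 < ϖ)
    (S₀ S₁ : Matrix (Fin n) (Fin n) ℝ) (hS₀symm : S₀.IsSymm) (hS₁symm : S₁.IsSymm)
    (hlmi : (-(Matrix.fromBlocks
        (Aᵀ * S₀ * A - S₀ + S₁ - ϖ • Q) (Aᵀ * S₀ * B)
        (Bᵀ * S₀ * A) (Bᵀ * S₀ * B - ϖ • R))).PosSemidef)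
    (hpd : ((1 / ϖ) • S₁ - (1 / γ - 1) • Pγ).PosDef) :
    ∀ x : Fin n → ℝ, x ≠ 0 →
      F.mulVec x ⬝ᵥ (Pγ + (1 / ϖ) • S₀).mulVec (F.mulVec x)
        - x ⬝ᵥ (Pγ + (1 / ϖ) • S₀).mulVec x < 0 :=
  classical_lqr_lmi_decrease_general n m A B Q hQ R hR γ hγ0 hγ1 K F hF Pγ hbellman ϖ hϖ S₀ S₁ hlmi
    hpd
end

section
/- Let f : ℝⁿ → ℝⁿ be continuous with f(0) = 0, and let V : ℝⁿ → ℝ be continuous with V(0) = 0 and V(x) > 0 for all x ≠ 0. Let ρ > 0 and suppose the sublevel set S := {x ∈ ℝⁿ : V(x) ≤ ρ} is compact. Let ᾱ ∈ (0,1) and σ₁, σ₂ ≥ σ̲ > 0 with σ₁ + σ₂ ≥ 2, and suppose that for every x ∈ S: (1/2)·(σ₁·V(f(x)) + σ₂·V(f(f(x)))) ≤ (1−ᾱ)·V(x). Then: (i) for every x₀ ∈ S, the trajectory x_k = f^[k](x₀) converges to the origin as k → ∞, so S is contained in the region of attraction of the origin; and (ii) for every ε > 0 there exists δ > 0 such that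 every x₀ ∈ S with ‖x₀‖ < δ satisfies ‖f^[k](x₀)‖ < ε for all k ≥ 0. -/
/-!
On `S = {V ≤ ρ}` the weighted decrease with `σ₁ + σ₂ ≥ 2` forces `V` to drop by the factor
`1 - ᾱ` within one or two steps, while a single step enlarges `V` by at most `2 (1 - ᾱ) / σ₁`.
Hence `V (f^[k] x) ≤ C (1 - ᾱ) ^ (k / 2) V x` along trajectories from `S`. Since `V` is
positive definite with a compact sublevel set, `V → 0` forces the state to `0`, which gives
attractivity; the uniform bound `V (f^[k] x) ≤ C V x` gives stability.
-/

open Filter Topology Set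

theorem le_or_le_of_weighted_two_step_le {σ₁ σ₂ u w v : ℝ} (hσ₁ : 0 < σ₁) (hσ₂ : 0 ≤ σ₂)
    (hσ : 2 ≤ σ₁ + σ₂) (hv : 0 ≤ v) (h : (1 / 2 : ℝ) * (σ₁ * u + σ₂ * w) ≤ v) :
    u ≤ v ∨ w ≤ v := by
  by_contra! ⟨hu, hw⟩
  nlinarith [mul_lt_mul_of_pos_left hu hσ₁, mul_le_mul_of_nonneg_left hw.le hσ₂]

theorem le_div_mul_of_weighted_two_step_le {σ₁ σ₂ u w a v : ℝ} (hσ₁ : 0 < σ₁) (hσ₂ : 0 ≤ σ₂)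
    (hw : 0 ≤ w) (h : (1 / 2 : ℝ) * (σ₁ * u + σ₂ * w) ≤ a * v) : u ≤ 2 * a / σ₁ * v := by
  rw [div_mul_eq_mul_div, le_div_iff₀ hσ₁]
  nlinarith [mul_nonneg hσ₂ hw]

theorem apply_iterate_le_mul_pow_half {X : Type*} {f : X → X} {V : X → ℝ} {ρ a C : ℝ}
    (hV : ∀ x, 0 ≤ V x) (ha₀ : 0 ≤ a) (ha₁ : a ≤ 1)
    (hC : 1 ≤ C) (hgrow : ∀ x, V x ≤ ρ → V (f x) ≤ C * V x)
    (hdec : ∀ x, V x ≤ ρ → V (f x) ≤ a * V x ∨ V (f (f x)) ≤ a * V x) (k : ℕ) :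
    ∀ x, V x ≤ ρ → V (f^[k] x) ≤ C * a ^ (k / 2) * V x := by
  induction k using Nat.twoStepInduction with
  | zero => intro x _; simpa using mul_le_mul_of_nonneg_right hC (hV x)
  | one => simpa using hgrow
  | more k ih₀ ih₁ =>
    intro x hx
    have hsub : a * V x ≤ ρ := (mul_le_of_le_one_left (hV x) ha₁).trans hx
    rcases hdec x hx with h₁ | h₂
    · have hpow : a ^ ((k + 1) / 2) ≤ a ^ (k / 2) := pow_le_pow_of_le_one ha₀ ha₁ (by omega)
      calc V (f^[k + 2] x) = V (f^[k + 1] (f x)) := rfl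
        _ ≤ C * a ^ ((k + 1) / 2) * V (f x) := ih₁ _ (h₁.trans hsub)
        _ ≤ C * a ^ (k / 2) * (a * V x) := by gcongr; exact hV _
        _ = C * a ^ ((k + 2) / 2) * V x := by rw [Nat.add_div_right k two_pos]; ring
    · calc V (f^[k + 2] x) = V (f^[k] (f (f x))) := rfl
        _ ≤ C * a ^ (k / 2) * V (f (f x)) := ih₀ _ (h₂.trans hsub)
        _ ≤ C * a ^ (k / 2) * (a * V x) := mul_le_mul_of_nonneg_left h₂ (by positivity)
        _ = C * a ^ ((k + 2) / 2) * V x := by rw [Nat.add_div_right k two_pos]; ring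

theorem comap_nhds_zero_le_nhds_of_isCompact_sublevel {X : Type*} [TopologicalSpace X]
    {V : X → ℝ} {x₀ : X} {ρ : ℝ} (hV : Continuous V) (hpos : ∀ x, x ≠ x₀ → 0 < V x)
    (hρ : 0 < ρ) (hK : IsCompact {x | V x ≤ ρ}) : comap V (𝓝 0) ≤ 𝓝 x₀ := by
  intro U hU
  -- `V` is bounded below by some `m > 0` on the compact set `{V ≤ ρ} \ interior U`.
  obtain ⟨m, hm, hmV⟩ := (hK.inter_right isOpen_interior.isClosed_compl).exists_forall_le'
    hV.continuousOn fun x hx => hpos x fun hx₀ => hx.2 (hx₀ ▸ mem_interior_iff_mem_nhds.2 hU)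
  refine mem_comap.2 ⟨Iio (min m ρ), Iio_mem_nhds (lt_min hm hρ), fun y hy => ?_⟩
  by_contra hyU
  have hyρ : V y ≤ ρ := (lt_min_iff.1 hy).2.le
  exact (lt_min_iff.1 hy).1.not_ge (hmV y ⟨hyρ, fun hyi => hyU (interior_subset hyi)⟩)

theorem exists_forall_norm_iterate_lt {E : Type*} [SeminormedAddGroup E] {f : E → E}
    {V : E → ℝ} {S : Set E} {C : ℝ} (hV : Tendsto V (𝓝 0) (𝓝 0))
    (hVnn : ∀ x, 0 ≤ V x) (hsmall : comap V (𝓝 0) ≤ 𝓝 0)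
    (hbound : ∀ x ∈ S, ∀ k, V (f^[k] x) ≤ C * V x) :
    ∀ ε > (0 : ℝ), ∃ δ > (0 : ℝ), ∀ x ∈ S, ‖x‖ < δ → ∀ k, ‖f^[k] x‖ < ε := by
  intro ε hε
  obtain ⟨t, ht, hVt⟩ := mem_comap.1 (hsmall (Metric.ball_mem_nhds 0 hε))
  obtain ⟨η, hη, hηt⟩ := Metric.mem_nhds_iff.1 ht
  have hCV : Tendsto (fun x => C * V x) (𝓝 0) (𝓝 0) := by simpa using hV.const_mul C
  obtain ⟨δ, hδ, hδη⟩ := Metric.mem_nhds_iff.1 (hCV (Metric.ball_mem_nhds 0 hη))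
  refine ⟨δ, hδ, fun x hx hxδ k => ?_⟩
  have hCVx : C * V x < η := (abs_lt.1 (by simpa using hδη (mem_ball_zero_iff.2 hxδ))).2
  have hVk : V (f^[k] x) ∈ Metric.ball 0 η := by
    rw [Real.ball_eq_Ioo, zero_sub, zero_add]
    exact ⟨(neg_neg_of_pos hη).trans_le (hVnn _), (hbound x hx k).trans_lt hCVx⟩
  exact mem_ball_zero_iff.1 (hVt (hηt hVk))

theorem sublevel_inner_roa_approximation_general
    (n : ℕ) (f : EuclideanSpace ℝ (Fin n) → EuclideanSpace ℝ (Fin n))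
    (V : EuclideanSpace ℝ (Fin n) → ℝ) (hVcont : Continuous V)
    (hV0 : V 0 = 0) (hVpos : ∀ x, x ≠ 0 → 0 < V x)
    (ρ : ℝ) (hρ : 0 < ρ)
    (hScompact : IsCompact {x : EuclideanSpace ℝ (Fin n) | V x ≤ ρ})
    (αbar : ℝ) (hα0 : 0 < αbar) (hα1 : αbar < 1)
    (σ₁ σ₂ σlow : ℝ) (hσlow : 0 < σlow) (hσ₁ : σlow ≤ σ₁) (hσ₂ : σlow ≤ σ₂)
    (hσsum : 2 ≤ σ₁ + σ₂)
    (hdec : ∀ x, V x ≤ ρ →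
      (1 / 2 : ℝ) * (σ₁ * V (f x) + σ₂ * V (f (f x))) ≤ (1 - αbar) * V x) :
    (∀ x₀, V x₀ ≤ ρ →
      Filter.Tendsto (fun k => f^[k] x₀) Filter.atTop (nhds 0)) ∧
    (∀ ε > (0 : ℝ), ∃ δ > (0 : ℝ), ∀ x₀, V x₀ ≤ ρ → ‖x₀‖ < δ →
      ∀ k, ‖f^[k] x₀‖ < ε) := by
  have hVnn : ∀ x, 0 ≤ V x := fun x => by
    rcases eq_or_ne x 0 with rfl | hx
    exacts [hV0.ge, (hVpos x hx).le]
  have hσ₁0 : 0 < σ₁ := hσlow.trans_le hσ₁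
  have hσ₂0 : 0 ≤ σ₂ := (hσlow.trans_le hσ₂).le
  have ha₀ : 0 ≤ 1 - αbar := by linarith
  set C := max 1 (2 * (1 - αbar) / σ₁)
  have hbound : ∀ k x, V x ≤ ρ → V (f^[k] x) ≤ C * (1 - αbar) ^ (k / 2) * V x :=
    apply_iterate_le_mul_pow_half hVnn ha₀ (by linarith) (le_max_left _ _)
      (fun x hx => (le_div_mul_of_weighted_two_step_le hσ₁0 hσ₂0 (hVnn _) (hdec x hx)).trans
        (mul_le_mul_of_nonneg_right (le_max_right _ _) (hVnn x)))
      (fun x hx => le_or_le_of_weighted_two_step_le hσ₁0 hσ₂0 hσsum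
        (mul_nonneg ha₀ (hVnn x)) (hdec x hx))
  have hsmall := comap_nhds_zero_le_nhds_of_isCompact_sublevel hVcont hVpos hρ hScompact
  refine ⟨fun x₀ hx₀ => (tendsto_comap_iff.2 ?_).mono_right hsmall,
    exists_forall_norm_iterate_lt (C := C) (hV0 ▸ hVcont.tendsto 0) hVnn hsmall fun x hx k => ?_⟩
  · have hpow : Tendsto (fun k : ℕ => C * (1 - αbar) ^ (k / 2) * V x₀) atTop (𝓝 0) := by
      simpa using (((tendsto_pow_atTop_nhds_zero_of_lt_one ha₀ (by linarith)).comp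
        (Nat.tendsto_div_const_atTop two_ne_zero)).const_mul C).mul_const (V x₀)
    exact squeeze_zero (fun k => hVnn _) (fun k => hbound k x₀ hx₀) hpow
  · refine (hbound k x hx).trans (mul_le_mul_of_nonneg_right ?_ (hVnn x))
    exact mul_le_of_le_one_right (zero_le_one.trans (le_max_left _ _))
      (pow_le_one₀ ha₀ (by linarith))

/-- (Theorem 5: sublevel set is an inner ROA approximation, M = 2.)
Let `f : ℝⁿ → ℝⁿ` be continuous with `f(0) = 0`, `V` continuous and positive definite,
`ρ > 0` with compact sublevel set `S = {x : V(x) ≤ ρ}`, `ᾱ ∈ (0,1)`, and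
`σ₁, σ₂ ≥ σ̲ > 0` with `σ₁ + σ₂ ≥ 2`.  If the generalized two-step decrease
`(1/2)·(σ₁·V(f(x)) + σ₂·V(f(f(x)))) ≤ (1−ᾱ)·V(x)` holds for every `x ∈ S`, then:
(i) for every `x₀ ∈ S` the trajectory `f^[k](x₀)` converges to the origin (so `S` is
contained in the region of attraction), and (ii) for every `ε > 0` there is `δ > 0`
such that every `x₀ ∈ S` with `‖x₀‖ < δ` satisfies `‖f^[k](x₀)‖ < ε` for all `k`. -/
theorem sublevel_inner_roa_approximation
    (n : ℕ) (f : EuclideanSpace ℝ (Fin n) → EuclideanSpace ℝ (Fin n))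
    (hfcont : Continuous f) (hf0 : f 0 = 0)
    (V : EuclideanSpace ℝ (Fin n) → ℝ) (hVcont : Continuous V)
    (hV0 : V 0 = 0) (hVpos : ∀ x, x ≠ 0 → 0 < V x)
    (ρ : ℝ) (hρ : 0 < ρ)
    (hScompact : IsCompact {x : EuclideanSpace ℝ (Fin n) | V x ≤ ρ})
    (αbar : ℝ) (hα0 : 0 < αbar) (hα1 : αbar < 1)
    (σ₁ σ₂ σlow : ℝ) (hσlow : 0 < σlow) (hσ₁ : σlow ≤ σ₁) (hσ₂ : σlow ≤ σ₂)
    (hσsum : 2 ≤ σ₁ + σ₂)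
    (hdec : ∀ x, V x ≤ ρ →
      (1 / 2 : ℝ) * (σ₁ * V (f x) + σ₂ * V (f (f x))) ≤ (1 - αbar) * V x) :
    (∀ x₀, V x₀ ≤ ρ →
      Filter.Tendsto (fun k => f^[k] x₀) Filter.atTop (nhds 0)) ∧
    (∀ ε > (0 : ℝ), ∃ δ > (0 : ℝ), ∀ x₀, V x₀ ≤ ρ → ‖x₀‖ < δ →
      ∀ k, ‖f^[k] x₀‖ < ε) :=
  sublevel_inner_roa_approximation_general n f V hVcont hV0 hVpos ρ hρ hScompact αbar hα0 hα1 σ₁ σ₂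
    σlow hσlow hσ₁ hσ₂ hσsum hdec
end

section
/- For γ ∈ (0,1), define s(γ) := √((5γ−1)² + 4γ) and K(γ) := −2·(1 + 2/(5γ−1 + s(γ)))⁻¹. Then 5γ−1 + s(γ) > 0, and |2 + K(γ)| < 1 if and only if γ > 1/3. -/
/-!
Write `a = 5γ - 1` and `x = a + s`. Since `s = √(a² + 4γ) > |a|`, `x > 0`, and then
`2 + K = 4 / (x + 2)`, so `|2 + K| < 1` exactly when `x > 2`. Squaring `2 - a < s` turns this
into the linear condition `4 < 4a + 4γ`, i.e. `γ > 1/3`.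
-/

lemma add_sqrt_sq_add_pos {c : ℝ} (a : ℝ) (hc : 0 < c) : 0 < a + √(a ^ 2 + c) := by
  have h : |a| < √(a ^ 2 + c) := by
    rw [← Real.sqrt_sq_eq_abs]
    exact Real.sqrt_lt_sqrt (sq_nonneg a) (lt_add_of_pos_right _ hc)
  linarith [neg_abs_le a]

lemma lt_add_sqrt_sq_add_iff {a b c : ℝ} (hb : 0 < b) (hc : 0 ≤ c) :
    b < a + √(a ^ 2 + c) ↔ b ^ 2 < 2 * a * b + c := by
  rcases le_or_gt a b with hab | hba
  · rw [← sub_lt_iff_lt_add', Real.lt_sqrt (sub_nonneg.2 hab)]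
    constructor <;> intro h <;> linarith
  · have hsqrt := Real.sqrt_nonneg (a ^ 2 + c)
    exact iff_of_true (by linarith) (by nlinarith)

lemma abs_two_add_neg_two_mul_inv_lt_one_iff {x : ℝ} (hx : 0 < x) :
    |2 + -2 * (1 + 2 / x)⁻¹| < 1 ↔ 2 < x := by
  have hF : 2 + -2 * (1 + 2 / x)⁻¹ = 4 / (x + 2) := by
    field_simp
    ring
  rw [hF, abs_of_pos (by positivity), div_lt_one (by positivity)]
  constructor <;> intro h <;> linarith

theorem scalar_lqr_stability_threshold_general
    (γ : ℝ) (hγ0 : 0 < γ)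
    (s : ℝ) (hs : s = Real.sqrt ((5 * γ - 1) ^ 2 + 4 * γ))
    (K : ℝ) (hK : K = -2 * (1 + 2 / (5 * γ - 1 + s))⁻¹) :
    0 < 5 * γ - 1 + s ∧ (|2 + K| < 1 ↔ γ > 1 / 3) := by
  have hpos : 0 < 5 * γ - 1 + s := hs ▸ add_sqrt_sq_add_pos _ (by positivity)
  refine ⟨hpos, ?_⟩
  rw [hK, abs_two_add_neg_two_mul_inv_lt_one_iff hpos, hs,
    lt_add_sqrt_sq_add_iff two_pos (by positivity)]
  constructor <;> intro h <;> linarith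

/-- (Scalar discounted LQR example.)  For `γ ∈ (0,1)`, with
`s(γ) := √((5γ−1)² + 4γ)` and `K(γ) := −2·(1 + 2/(5γ−1 + s(γ)))⁻¹`, one has
`5γ−1 + s(γ) > 0`, and `|2 + K(γ)| < 1` if and only if `γ > 1/3`. -/
theorem scalar_lqr_stability_threshold
    (γ : ℝ) (hγ0 : 0 < γ) (hγ1 : γ < 1)
    (s : ℝ) (hs : s = Real.sqrt ((5 * γ - 1) ^ 2 + 4 * γ))
    (K : ℝ) (hK : K = -2 * (1 + 2 / (5 * γ - 1 + s))⁻¹) :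
    0 < 5 * γ - 1 + s ∧ (|2 + K| < 1 ↔ γ > 1 / 3) :=
  scalar_lqr_stability_threshold_general γ hγ0 s hs K hK
end
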